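/- If a nonzero homogeneous polynomial identity fails: there is no nonzero homogeneous polynomial P ∈ ℝ[X,Y,Z] such that the function x ↦ P(e^x − 1, e^{x√2} − 1, e^{x√3} − 1) vanishes identically on ℝ. -/

import Mathlib

/-!
After the change of variables `X_i ↦ X_i - 1`, the identity says that a polynomial `Q` satisfies
`Q(e^{x a_1}, …, e^{x a_n}) = 0` for all `x`, i.e. `∑_d c_d e^{(d · a) x} = 0`. When `a` is linearly
independent over `ℚ` (here `a = (1, √2, √3)`), distinct exponent vectors `d` give distinct
frequencies `d · a`, and the characters `x ↦ e^{w x}` of `(ℝ, +)` are linearly independent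
(Dedekind), so every coefficient vanishes.
-/

open Real

theorem Irrational.eq_zero_of_ratCast_add_ratCast_mul {x : ℝ} (hx : Irrational x) {p q : ℚ}
    (h : (p : ℝ) + q * x = 0) : p = 0 ∧ q = 0 := by
  obtain rfl | hq := eq_or_ne q 0
  · simpa using h
  · exact ((hx.ratCast_mul hq).ratCast_add p |>.ne_zero h).elim

theorem linearIndependent_one_sqrt_two_sqrt_three :
    LinearIndependent ℚ ![(1 : ℝ), √2, √3] := by
  rw [Fintype.linearIndependent_iff]
  intro g hg
  simp only [Fin.sum_univ_three, Matrix.cons_val_zero, Matrix.cons_val_one,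
    Matrix.cons_val_two, Matrix.head_cons, Matrix.tail_cons, Rat.smul_def, mul_one] at hg
  have h2 : √2 ^ 2 = 2 := sq_sqrt (by norm_num)
  have h3 : √3 ^ 2 = 3 := sq_sqrt (by norm_num)
  have h6 : √2 * √3 = √6 := by rw [← sqrt_mul (by norm_num)]; norm_num
  -- squaring `g 0 + g 1 * √2 = -g 2 * √3` isolates `√2`
  have hAB : g 0 * g 1 = 0 := by
    have := (show Irrational √2 by norm_num).eq_zero_of_ratCast_add_ratCast_mul
      (p := g 0 ^ 2 + 2 * g 1 ^ 2 - 3 * g 2 ^ 2) (q := 2 * g 0 * g 1) (by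
        push_cast
        linear_combination (g 0 + g 1 * √2 - g 2 * √3) * hg - g 1 ^ 2 * h2 + g 2 ^ 2 * h3)
    simpa using this.2
  have h012 : g 0 = 0 ∧ g 1 = 0 ∧ g 2 = 0 := by
    obtain h0 | h1 := mul_eq_zero.mp hAB
    · have h0' : (g 0 : ℝ) = 0 := by exact_mod_cast h0
      obtain ⟨h2, h1⟩ := (show Irrational √6 by norm_num).eq_zero_of_ratCast_add_ratCast_mul
        (p := 3 * g 2) (q := g 1) (by
          push_cast
          linear_combination √3 * hg - √3 * h0' - g 1 * h6 - g 2 * h3)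
      exact ⟨h0, h1, by simpa using h2⟩
    · have h1' : (g 1 : ℝ) = 0 := by exact_mod_cast h1
      obtain ⟨h0, h2⟩ := (show Irrational √3 by norm_num).eq_zero_of_ratCast_add_ratCast_mul
        (p := g 0) (q := g 2) (by linear_combination hg - √2 * h1')
      exact ⟨h0, h1, h2⟩
  intro i
  fin_cases i <;> simp [h012]

noncomputable def expMulHom (w : ℝ) : Multiplicative ℝ →* ℝ where
  toFun x := exp (w * x.toAdd)
  map_one' := by simp
  map_mul' x y := by simp [mul_add, exp_add]

theorem linearIndependent_exp_mul :
    LinearIndependent ℝ (fun w : ℝ => fun x : ℝ => exp (w * x)) := by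
  refine (linearIndependent_monoidHom (Multiplicative ℝ) ℝ).comp expMulHom fun w w' h => ?_
  simpa [expMulHom] using DFunLike.congr_fun h (Multiplicative.ofAdd 1)

section
variable {σ : Type*} [Fintype σ] {a : σ → ℝ}

theorem LinearIndependent.injective_sum_natCast_mul (ha : LinearIndependent ℚ a) :
    Function.Injective fun d : σ →₀ ℕ => ∑ i, (d i : ℝ) * a i := by
  intro d d' hdd
  have hzero := Fintype.linearIndependent_iff.mp ha (fun i => (d i : ℚ) - d' i) (by
    simp only [Rat.smul_def, Rat.cast_sub, Rat.cast_natCast, sub_mul, Finset.sum_sub_distrib]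
    exact sub_eq_zero.mpr hdd)
  ext i
  exact_mod_cast sub_eq_zero.mp (hzero i)

namespace MvPolynomial

theorem eval_exp_mul (Q : MvPolynomial σ ℝ) (x : ℝ) :
    eval (fun i => exp (x * a i)) Q
      = ∑ d ∈ Q.support, Q.coeff d * exp ((∑ i, (d i : ℝ) * a i) * x) := by
  rw [eval_eq']
  refine Finset.sum_congr rfl fun d _ => congrArg (Q.coeff d * ·) ?_
  simp only [← exp_nat_mul, ← exp_sum, Finset.sum_mul]
  exact congrArg exp (Finset.sum_congr rfl fun i _ => by ring)

theorem eq_zero_of_eval_exp_mul (ha : LinearIndependent ℚ a) (Q : MvPolynomial σ ℝ)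
    (h : ∀ x, eval (fun i => exp (x * a i)) Q = 0) : Q = 0 := by
  have hindep := linearIndependent_exp_mul.comp _ ha.injective_sum_natCast_mul
  ext d
  by_contra hd
  refine hd (linearIndependent_iff'.mp hindep Q.support Q.coeff ?_ d (mem_support_iff.mpr hd))
  funext x
  simpa [eval_exp_mul] using h x

theorem eq_zero_of_eval_exp_mul_sub_one (ha : LinearIndependent ℚ a) (P : MvPolynomial σ ℝ)
    (h : ∀ x, eval (fun i => exp (x * a i) - 1) P = 0) : P = 0 := by
  set Q := bind₁ (fun i => X i - 1) P
  have hQ : Q = 0 := eq_zero_of_eval_exp_mul ha Q fun x => by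
    change eval₂Hom (RingHom.id ℝ) _ (bind₁ _ P) = 0
    simpa [eval₂Hom_bind₁] using h x
  have hPQ : P = bind₁ (fun i => X i + 1) Q := by
    simp [Q, bind₁_bind₁]
  rw [hPQ, hQ, map_zero]

end MvPolynomial
end

theorem stmt2_general (P : MvPolynomial (Fin 3) ℝ)
    (h : ∀ x : ℝ,
      MvPolynomial.eval
        ![exp x - 1, exp (x * Real.sqrt 2) - 1, exp (x * Real.sqrt 3) - 1] P = 0) :
    P = 0 := by
  refine MvPolynomial.eq_zero_of_eval_exp_mul_sub_one linearIndependent_one_sqrt_two_sqrt_three P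
    fun x => ?_
  convert h x using 3
  funext i
  fin_cases i <;> simp

/-- There is no nonzero homogeneous polynomial `P ∈ ℝ[X,Y,Z]` such that
`x ↦ P(e^x − 1, e^{x√2} − 1, e^{x√3} − 1)` vanishes identically on `ℝ`. -/
theorem stmt2 (m : ℕ) (P : MvPolynomial (Fin 3) ℝ) (hP : P.IsHomogeneous m)
    (h : ∀ x : ℝ,
      MvPolynomial.eval
        ![exp x - 1, exp (x * Real.sqrt 2) - 1, exp (x * Real.sqrt 3) - 1] P = 0) :
    P = 0 :=
  stmt2_general P h
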